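/- arXiv:2502.04587 — 3 statements merged into one kernel-verified Lean document; each statement's English description precedes it below -/
import Mathlib

section
/- Let R : ℝ^d → ℝ be C² with ∇R(0) = 0 and Hessian H = ∇²R(0) strictly negative definite, and suppose R(y) − R(0) ≤ −c|y|²/(1+|y|²) for some c > 0 (or any hypothesis ensuring domination). Let Φ₀ be continuous, bounded, nonnegative, integrable with Φ₀(0) > 0. Then ∫_{ℝ^d} exp{t(R(y/√t) − R(0))} Φ₀(y/√t) dy → Φ₀(0) ∫_{ℝ^d} exp{½ y·Hy} dy as t → ∞. -/
open MeasureTheory Filter Topology Set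

lemma taylor2_tendsto {g g' : ℝ → ℝ} {Q : ℝ}
    (hg : ∀ s, HasDerivAt g (g' s) s) (h0 : g' 0 = 0) (h2 : HasDerivAt g' Q 0) :
    Tendsto (fun h => (g h - g 0) / h ^ 2) (𝓝[>] (0:ℝ)) (𝓝 (Q / 2)) := by
  rw [Metric.tendsto_nhdsWithin_nhds]
  intro ε hε
  have hslope := h2.isLittleO
  rw [Asymptotics.isLittleO_iff] at hslope
  have hev := hslope (show (0:ℝ) < ε/2 by linarith)
  rw [Metric.eventually_nhds_iff] at hev
  obtain ⟨δ, hδ, hkey⟩ := hev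
  refine ⟨δ, hδ, ?_⟩
  intro h hh hdist
  have hh0 : (0:ℝ) < h := hh
  have hhδ : h < δ := by
    rwa [Real.dist_eq, sub_zero, abs_of_pos hh0] at hdist
  -- MVT for φ s = g s - Q/2 * s^2
  have hφ : ∀ x : ℝ, HasDerivAt (fun s => g s - Q/2 * s^2) (g' x - Q * x) x := by
    intro x
    have := (hg x).sub (((hasDerivAt_pow 2 x)).const_mul (Q/2))
    exact this.congr_deriv (by simp; ring)
  obtain ⟨ξ, hξ, hsl⟩ := exists_hasDerivAt_eq_slope (fun s => g s - Q/2 * s^2)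
    (fun x => g' x - Q * x) hh0
    (fun x _ => (hφ x).continuousAt.continuousWithinAt)
    (fun x _ => hφ x)
  have hξ0 : 0 < ξ := hξ.1
  have hξh : ξ < h := hξ.2
  have e1 : g' ξ - Q * ξ = (g h - g 0 - Q/2 * h^2) / h := by
    rw [hsl]; ring_nf
  have e2 : (g h - g 0) / h ^ 2 - Q / 2 = (g' ξ - Q * ξ) / h := by
    rw [e1]
    field_simp
  have hbd : |g' ξ - Q * ξ| ≤ ε/2 * ξ := by
    have := hkey (y := ξ) (by rw [Real.dist_eq, sub_zero, abs_of_pos hξ0]; linarith)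
    simp only [h0, sub_zero, smul_eq_mul, Real.norm_eq_abs, abs_of_pos hξ0, mul_comm] at this
    linarith [this]
  rw [Real.dist_eq, e2, abs_div, abs_of_pos hh0]
  have h1 : |g' ξ - Q * ξ| / h ≤ (ε/2 * ξ) / h := by gcongr
  have h2 : (ε/2 * ξ) / h < ε := by
    rw [div_lt_iff₀ hh0]; nlinarith
  linarith

lemma inv_sqrt_tendsto : Tendsto (fun t : ℝ => (Real.sqrt t)⁻¹) atTop (𝓝[>] (0:ℝ)) := by
  have hs : Tendsto Real.sqrt atTop atTop := by
    apply Tendsto.congr' (f₁ := fun t : ℝ => t ^ ((1:ℝ)/2))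
    · filter_upwards [eventually_ge_atTop (0:ℝ)] with t ht
      rw [Real.sqrt_eq_rpow]
    · exact tendsto_rpow_atTop (by norm_num)
  apply tendsto_nhdsWithin_of_tendsto_nhds_of_eventually_within
  · exact tendsto_inv_atTop_zero.comp hs
  · filter_upwards [eventually_gt_atTop (0:ℝ)] with t ht
    exact inv_pos.2 (Real.sqrt_pos.2 ht)

lemma pointwise_exponent {d : ℕ}
    (R : EuclideanSpace ℝ (Fin d) → ℝ) (hR : ContDiff ℝ 2 R)
    (hgrad : fderiv ℝ R 0 = 0) (y : EuclideanSpace ℝ (Fin d)) :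
    Tendsto (fun t : ℝ => t * (R ((Real.sqrt t)⁻¹ • y) - R 0)) atTop
      (𝓝 (iteratedFDeriv ℝ 2 R 0 ![y, y] / 2)) := by
  set Q : ℝ := fderiv ℝ (fderiv ℝ R) 0 y y with hQ
  have hQ' : iteratedFDeriv ℝ 2 R 0 ![y, y] = Q := by
    rw [iteratedFDeriv_two_apply]; simp; rfl
  have hsm : ∀ s : ℝ, HasDerivAt (fun s : ℝ => s • y) y s := by
    intro s; simpa using (hasDerivAt_id s).smul_const y
  have hg : ∀ s : ℝ, HasDerivAt (fun s : ℝ => R (s • y)) (fderiv ℝ R (s • y) y) s := by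
    intro s
    have := (((hR.differentiable (by norm_num)) (s • y)).hasFDerivAt).comp_hasDerivAt s (hsm s)
    exact this
  have h0 : fderiv ℝ R ((0:ℝ) • y) y = 0 := by rw [zero_smul, hgrad]; rfl
  have hF : ContDiff ℝ 1 (fderiv ℝ R) := hR.fderiv_right (by norm_num)
  have hFd : HasFDerivAt (fderiv ℝ R) (fderiv ℝ (fderiv ℝ R) 0) 0 :=
    ((hF.differentiable (by norm_num)) 0).hasFDerivAt
  have happ : HasFDerivAt (fun x : EuclideanSpace ℝ (Fin d) => fderiv ℝ R x y)
      ((ContinuousLinearMap.apply ℝ ℝ y).comp (fderiv ℝ (fderiv ℝ R) 0)) 0 :=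
    ((ContinuousLinearMap.apply ℝ ℝ y).hasFDerivAt).comp 0 hFd
  have hz : ((0:ℝ) • y) = (0 : EuclideanSpace ℝ (Fin d)) := zero_smul _ _
  rw [← hz] at happ
  have h2 : HasDerivAt (fun s : ℝ => fderiv ℝ R (s • y) y) Q 0 := by
    have := happ.comp_hasDerivAt 0 (hsm 0)
    rw [hz] at this
    exact this
  have hT := taylor2_tendsto hg h0 h2
  have hcomp := hT.comp inv_sqrt_tendsto
  rw [hQ']
  apply Tendsto.congr' _ hcomp
  filter_upwards [eventually_gt_atTop (0:ℝ)] with t ht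
  have hst : Real.sqrt t > 0 := Real.sqrt_pos.2 ht
  have : ((Real.sqrt t)⁻¹) ^ 2 = t⁻¹ := by
    rw [← Real.sq_sqrt ht.le]; field_simp
    rw [Real.sqrt_sq hst.le]
  simp only [Function.comp_apply, this, zero_smul]
  field_simp

set_option maxHeartbeats 1000000 in
/-- Laplace-type asymptotics:
`∫ exp{t(R(y/√t) − R(0))} Φ₀(y/√t) dy → Φ₀(0) ∫ exp{½ y·Hy} dy` with `H = ∇²R(0)`. -/
theorem stmt3 {d : ℕ}
    (R : EuclideanSpace ℝ (Fin d) → ℝ) (hR : ContDiff ℝ 2 R)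
    (hgrad : fderiv ℝ R 0 = 0)
    (hHess : ∀ v : EuclideanSpace ℝ (Fin d), v ≠ 0 → iteratedFDeriv ℝ 2 R 0 ![v, v] < 0)
    (c : ℝ) (hc : 0 < c)
    (hdom : ∀ y, R y - R 0 ≤ -c * ‖y‖ ^ 2 / (1 + ‖y‖ ^ 2))
    (Φ₀ : EuclideanSpace ℝ (Fin d) → ℝ)
    (hΦcont : Continuous Φ₀) (hΦbdd : ∃ C, ∀ y, |Φ₀ y| ≤ C)
    (hΦnn : ∀ y, 0 ≤ Φ₀ y) (hΦint : Integrable Φ₀) (hΦ0 : 0 < Φ₀ 0) :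
    Tendsto (fun t : ℝ =>
        ∫ y, Real.exp (t * (R ((Real.sqrt t)⁻¹ • y) - R 0)) * Φ₀ ((Real.sqrt t)⁻¹ • y))
      atTop
      (𝓝 (Φ₀ 0 * ∫ y, Real.exp ((1 / 2) * iteratedFDeriv ℝ 2 R 0 ![y, y]))) := by
  classical
  obtain ⟨C, hC⟩ := hΦbdd
  have hC0 : 0 ≤ C := le_trans (abs_nonneg _) (hC 0)
  set f : ℝ → EuclideanSpace ℝ (Fin d) → ℝ := fun t y =>
    Real.exp (t * (R ((Real.sqrt t)⁻¹ • y) - R 0)) * Φ₀ ((Real.sqrt t)⁻¹ • y) with hf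
  set Q : EuclideanSpace ℝ (Fin d) → ℝ := fun y => iteratedFDeriv ℝ 2 R 0 ![y, y] with hQdef
  set B : ℝ → Set (EuclideanSpace ℝ (Fin d)) := fun t =>
    Metric.closedBall (0 : EuclideanSpace ℝ (Fin d)) (Real.sqrt t) with hB
  -- basic facts
  have hRle : ∀ x, R x - R 0 ≤ 0 := by
    intro x
    have h1 : 0 ≤ c * ‖x‖ ^ 2 / (1 + ‖x‖ ^ 2) := by positivity
    have := hdom x
    rw [neg_mul, neg_div] at this
    linarith
  have hfc : ∀ t, Continuous (f t) := by
    intro t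
    exact (Real.continuous_exp.comp ((continuous_const.mul ((hR.continuous.comp
      (continuous_const_smul ((Real.sqrt t)⁻¹))).sub continuous_const)))).mul
      (hΦcont.comp (continuous_const_smul ((Real.sqrt t)⁻¹)))
  have hfnn : ∀ t y, 0 ≤ f t y := fun t y => mul_nonneg (Real.exp_nonneg _) (hΦnn _)
  have hst : ∀ t : ℝ, 1 ≤ t → 0 < Real.sqrt t := fun t ht =>
    Real.sqrt_pos.2 (lt_of_lt_of_le one_pos ht)
  have hexp0 : ∀ t : ℝ, 0 ≤ t → ∀ y, t * (R ((Real.sqrt t)⁻¹ • y) - R 0) ≤ 0 :=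
    fun t ht y => mul_nonpos_iff.2 (Or.inl ⟨ht, hRle _⟩)
  -- integrability of f t
  have hint : ∀ t : ℝ, 1 ≤ t → Integrable (f t) := by
    intro t ht
    have hat : (Real.sqrt t)⁻¹ ≠ 0 := inv_ne_zero (ne_of_gt (hst t ht))
    have hΦs : Integrable (fun y => Φ₀ ((Real.sqrt t)⁻¹ • y)) := hΦint.comp_smul hat
    apply hΦs.mono' ((hfc t).aestronglyMeasurable)
    filter_upwards with y
    rw [Real.norm_eq_abs, abs_of_nonneg (hfnn t y)]
    calc f t y ≤ 1 * Φ₀ ((Real.sqrt t)⁻¹ • y) :=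
          mul_le_mul_of_nonneg_right
            (Real.exp_le_one_iff.2 (hexp0 t (le_trans zero_le_one ht) y)) (hΦnn _)
      _ = _ := one_mul _
  -- norm of scaled point
  have hnx : ∀ t : ℝ, 1 ≤ t → ∀ y : EuclideanSpace ℝ (Fin d),
      ‖(Real.sqrt t)⁻¹ • y‖ ^ 2 = ‖y‖ ^ 2 / t := by
    intro t ht y
    rw [norm_smul, Real.norm_eq_abs, abs_of_pos (inv_pos.2 (hst t ht)), mul_pow]
    rw [← Real.sq_sqrt (le_trans zero_le_one ht : (0:ℝ) ≤ t)]
    field_simp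
    rw [Real.sqrt_sq (hst t ht).le]
  -- inner bound
  have hbound : ∀ t : ℝ, 1 ≤ t → ∀ y, ‖y‖ ≤ Real.sqrt t →
      f t y ≤ C * Real.exp (-(c/2) * ‖y‖ ^ 2) := by
    intro t ht y hy
    have ht0 : (0:ℝ) < t := lt_of_lt_of_le one_pos ht
    have hyt : ‖y‖ ^ 2 ≤ t := by
      have := Real.sq_sqrt ht0.le
      nlinarith [hst t ht, norm_nonneg y]
    set x := (Real.sqrt t)⁻¹ • y with hx
    have hx2 : ‖x‖ ^ 2 = ‖y‖ ^ 2 / t := hnx t ht y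
    have hkey : t * (R x - R 0) ≤ -(c/2) * ‖y‖ ^ 2 := by
      have h1 : t * (R x - R 0) ≤ t * (-c * ‖x‖ ^ 2 / (1 + ‖x‖ ^ 2)) :=
        mul_le_mul_of_nonneg_left (hdom x) ht0.le
      have h2 : t * (-c * ‖x‖ ^ 2 / (1 + ‖x‖ ^ 2)) ≤ -(c/2) * ‖y‖ ^ 2 := by
        rw [hx2]
        have hden : (0:ℝ) < 1 + ‖y‖ ^ 2 / t := by positivity
        rw [show t * (-c * (‖y‖ ^ 2 / t) / (1 + ‖y‖ ^ 2 / t))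
            = -(c * ‖y‖ ^ 2 * t / (t + ‖y‖ ^ 2)) by field_simp]
        rw [show -(c/2) * ‖y‖ ^ 2 = -(c/2 * ‖y‖ ^ 2) by ring, neg_le_neg_iff]
        rw [le_div_iff₀ (by positivity : (0:ℝ) < t + ‖y‖ ^ 2)]
        nlinarith [hyt, hc.le, sq_nonneg (‖y‖),
          mul_le_mul_of_nonneg_left hyt (by positivity : (0:ℝ) ≤ c/2 * ‖y‖ ^ 2)]
      linarith
    have hfx : f t y = Real.exp (t * (R x - R 0)) * Φ₀ x := by
      simp only [hf, hx]
    rw [hfx, mul_comm C]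
    exact mul_le_mul (Real.exp_le_exp.2 hkey) (le_trans (le_abs_self _) (hC x)) (hΦnn x)
      (Real.exp_nonneg _)
  -- outer bound
  have houter : ∀ t : ℝ, 1 ≤ t → ∀ y, Real.sqrt t < ‖y‖ →
      f t y ≤ Real.exp (-(c/2) * t) * Φ₀ ((Real.sqrt t)⁻¹ • y) := by
    intro t ht y hy
    have ht0 : (0:ℝ) < t := lt_of_lt_of_le one_pos ht
    set x := (Real.sqrt t)⁻¹ • y with hx
    have hx1 : 1 ≤ ‖x‖ ^ 2 := by
      have hx2 : ‖x‖ ^ 2 = ‖y‖ ^ 2 / t := hnx t ht y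
      rw [hx2, le_div_iff₀ ht0]
      have := Real.sq_sqrt ht0.le
      nlinarith [hst t ht]
    have hkey : t * (R x - R 0) ≤ -(c/2) * t := by
      have h1 : t * (R x - R 0) ≤ t * (-c * ‖x‖ ^ 2 / (1 + ‖x‖ ^ 2)) :=
        mul_le_mul_of_nonneg_left (hdom x) ht0.le
      have h2 : -c * ‖x‖ ^ 2 / (1 + ‖x‖ ^ 2) ≤ -(c/2) := by
        rw [div_le_iff₀ (by positivity : (0:ℝ) < 1 + ‖x‖ ^ 2)]
        nlinarith
      nlinarith
    exact mul_le_mul_of_nonneg_right (Real.exp_le_exp.2 hkey) (hΦnn _)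
  -- Gaussian dominating function is integrable
  have hgauss : Integrable (fun v : EuclideanSpace ℝ (Fin d) =>
      Real.exp (-(c/2) * ‖v‖ ^ 2)) := by
    have h1 := (GaussianFourier.integrable_cexp_neg_mul_sq_norm_add (V := EuclideanSpace ℝ (Fin d))
      (b := ((c:ℂ)/2)) (by simp [half_pos hc]) 0 0).norm
    apply h1.congr
    filter_upwards with v
    simp [Complex.norm_exp]
    exact Or.inl (by rw [← Complex.ofReal_pow, Complex.ofReal_re])
  -- Part 1 : inner integral converges
  have hIn : Tendsto (fun t => ∫ y, (B t).indicator (f t) y) atTop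
      (𝓝 (∫ y, Φ₀ 0 * Real.exp ((1/2) * Q y))) := by
    apply tendsto_integral_filter_of_dominated_convergence
      (bound := fun y => C * Real.exp (-(c/2) * ‖y‖ ^ 2))
    · filter_upwards with t
      exact ((hfc t).aestronglyMeasurable).indicator Metric.isClosed_closedBall.measurableSet
    · filter_upwards [eventually_ge_atTop (1:ℝ)] with t ht
      filter_upwards with y
      rw [Set.indicator_apply]
      split_ifs with hy
      · rw [Real.norm_eq_abs, abs_of_nonneg (hfnn t y)]
        exact hbound t ht y (by simpa [hB, Metric.mem_closedBall, dist_zero_right] using hy)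
      · simp only [norm_zero]
        positivity
    · exact hgauss.const_mul C
    · filter_upwards with y
      have hmem : ∀ᶠ t : ℝ in atTop, y ∈ B t := by
        filter_upwards [eventually_ge_atTop (max 1 (‖y‖ ^ 2))] with t ht
        have h1 : ‖y‖ ^ 2 ≤ t := le_trans (le_max_right _ _) ht
        have : ‖y‖ ≤ Real.sqrt t := by
          rw [show ‖y‖ = Real.sqrt (‖y‖ ^ 2) by rw [Real.sqrt_sq (norm_nonneg y)]]
          exact Real.sqrt_le_sqrt h1
        simpa [hB, Metric.mem_closedBall, dist_zero_right] using this
      have hlim : Tendsto (fun t => f t y) atTop (𝓝 (Real.exp ((1/2) * Q y) * Φ₀ 0)) := by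
        rw [show (1:ℝ)/2 * Q y = Q y / 2 by ring]
        have hA : Tendsto (fun t : ℝ => Real.exp (t * (R ((Real.sqrt t)⁻¹ • y) - R 0)))
            atTop (𝓝 (Real.exp (Q y / 2))) :=
          (Real.continuous_exp.tendsto _).comp (pointwise_exponent R hR hgrad y)
        have hB2 : Tendsto (fun t : ℝ => Φ₀ ((Real.sqrt t)⁻¹ • y)) atTop (𝓝 (Φ₀ 0)) := by
          have h1 : Tendsto (fun t : ℝ => (Real.sqrt t)⁻¹ • y) atTop
              (𝓝 (0 : EuclideanSpace ℝ (Fin d))) := by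
            have := (inv_sqrt_tendsto.mono_right nhdsWithin_le_nhds).smul_const y
            simpa using this
          exact (hΦcont.tendsto 0).comp h1
        exact hA.mul hB2
      apply Tendsto.congr' _ (by rw [mul_comm] at hlim; exact hlim)
      filter_upwards [hmem] with t hty
      exact (Set.indicator_of_mem hty _).symm
  -- Part 2 : outer integral tends to zero
  have hOut : Tendsto (fun t => ∫ y in (B t)ᶜ, f t y) atTop (𝓝 0) := by
    set I0 : ℝ := ∫ y, Φ₀ y with hI0def
    have hI0 : 0 ≤ I0 := integral_nonneg hΦnn
    have hUb : ∀ t : ℝ, 1 ≤ t →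
        (∫ y in (B t)ᶜ, f t y) ≤ Real.exp (-(c/2) * t) * ((Real.sqrt t) ^ d * I0) := by
      intro t ht
      have hat : (Real.sqrt t)⁻¹ ≠ 0 := inv_ne_zero (ne_of_gt (hst t ht))
      have hΦs : Integrable (fun y => Φ₀ ((Real.sqrt t)⁻¹ • y)) := hΦint.comp_smul hat
      have step1 : (∫ y in (B t)ᶜ, f t y)
          ≤ ∫ y in (B t)ᶜ, Real.exp (-(c/2) * t) * Φ₀ ((Real.sqrt t)⁻¹ • y) := by
        apply setIntegral_mono_on ((hint t ht).integrableOn)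
          ((hΦs.const_mul _).integrableOn)
          (Metric.isClosed_closedBall.measurableSet.compl)
        intro y hy
        apply houter t ht y
        simp only [hB, Set.mem_compl_iff, Metric.mem_closedBall, dist_zero_right, not_le] at hy
        exact hy
      have step2 : (∫ y in (B t)ᶜ, Real.exp (-(c/2) * t) * Φ₀ ((Real.sqrt t)⁻¹ • y))
          ≤ ∫ y, Real.exp (-(c/2) * t) * Φ₀ ((Real.sqrt t)⁻¹ • y) := by
        apply setIntegral_le_integral (hΦs.const_mul _)
        filter_upwards with y
        exact mul_nonneg (Real.exp_nonneg _) (hΦnn _)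
      have step3 : (∫ y, Real.exp (-(c/2) * t) * Φ₀ ((Real.sqrt t)⁻¹ • y))
          = Real.exp (-(c/2) * t) * ((Real.sqrt t) ^ d * I0) := by
        rw [integral_const_mul]
        congr 1
        rw [Measure.integral_comp_smul volume Φ₀ ((Real.sqrt t)⁻¹), finrank_euclideanSpace_fin]
        rw [inv_pow, inv_inv, abs_of_nonneg (pow_nonneg (hst t ht).le d)]
        rfl
      linarith [step1, step2, step3.le, step3.ge]
    have hLb : ∀ t : ℝ, 1 ≤ t → 0 ≤ ∫ y in (B t)ᶜ, f t y := fun t ht =>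
      setIntegral_nonneg (Metric.isClosed_closedBall.measurableSet.compl) (fun y _ => hfnn t y)
    -- the upper bound tends to zero
    have hU : Tendsto (fun t : ℝ => Real.exp (-(c/2) * t) * ((Real.sqrt t) ^ d * I0))
        atTop (𝓝 0) := by
      have hV : Tendsto (fun t : ℝ => Real.exp (-(c/2) * t) * (t ^ d * I0)) atTop (𝓝 0) := by
        have base : Tendsto (fun t : ℝ => ((c/2) * t) ^ d * Real.exp (-((c/2) * t)))
            atTop (𝓝 0) :=
          (Real.tendsto_pow_mul_exp_neg_atTop_nhds_zero d).comp
            (Tendsto.const_mul_atTop (half_pos hc) tendsto_id)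
        have base2 := base.const_mul ((2/c) ^ d * I0)
        rw [mul_zero] at base2
        apply Tendsto.congr _ base2
        intro t
        rw [mul_pow]
        have hcc : ((2:ℝ)/c) ^ d * (c/2) ^ d = 1 := by
          rw [← mul_pow]
          rw [show (2:ℝ)/c * (c/2) = 1 by field_simp]
          exact one_pow d
        rw [show -((c/2) * t) = -(c/2) * t by ring]
        linear_combination (I0 * t ^ d * Real.exp (-(c/2) * t)) * hcc
      apply tendsto_of_tendsto_of_tendsto_of_le_of_le' tendsto_const_nhds hV
      · filter_upwards [eventually_ge_atTop (1:ℝ)] with t ht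
        positivity
      · filter_upwards [eventually_ge_atTop (1:ℝ)] with t ht
        have h1 : Real.sqrt t ≤ t := by
          have h2 : Real.sqrt t ≤ Real.sqrt (t ^ 2) := Real.sqrt_le_sqrt
            (by nlinarith [mul_le_mul_of_nonneg_left ht (by linarith : (0:ℝ) ≤ t)])
          rwa [Real.sqrt_sq (by linarith : (0:ℝ) ≤ t)] at h2
        gcongr
    apply tendsto_of_tendsto_of_tendsto_of_le_of_le' tendsto_const_nhds hU
    · filter_upwards [eventually_ge_atTop (1:ℝ)] with t ht
      exact hLb t ht
    · filter_upwards [eventually_ge_atTop (1:ℝ)] with t ht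
      exact hUb t ht
  -- assemble
  have hsum := hIn.add hOut
  rw [add_zero] at hsum
  have target_eq : (∫ y, Φ₀ 0 * Real.exp ((1/2) * Q y))
      = Φ₀ 0 * ∫ y, Real.exp ((1/2) * Q y) := integral_const_mul _ _
  rw [target_eq] at hsum
  apply Tendsto.congr' _ hsum
  filter_upwards [eventually_ge_atTop (1:ℝ)] with t ht
  rw [integral_indicator Metric.isClosed_closedBall.measurableSet]
  exact integral_add_compl Metric.isClosed_closedBall.measurableSet (hint t ht)
end

section
/- Let (c_n(t))_{n≥0} be nonnegative with 0 < Σ_n c_n(t)² < ∞ for each t > 0, and let N_t have P(N_t = n) = c_n(t)²/Σ_j c_j(t)². Suppose (N_t − μt)/(σ√t) ⇒ N(0,1) for some μ, σ > 0. Then for s = s(t) with s(t)·t^α bounded above and below by positive constants: if α > 1 then E[e^{-s(t)N_t} | N_t > 0] → 1, and if 0 < α < 1 then E[e^{-s(t)N_t} | N_t > 0] → 0, as t → ∞, provided additionally P(N_t = 0) → 0. -/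
open MeasureTheory Filter Complex Topology intervalIntegral
open scoped ENNReal NNReal

theorem summChar (q : ℕ → ℝ) (hq : ∀ n, 0 ≤ q n) (hs : Summable q) (a v θ : ℝ) :
    Summable (fun n : ℕ => ((q n : ℝ) : ℂ) *
      Complex.exp (Complex.I * θ * ((n : ℂ) - (a : ℝ)) / ((v : ℝ) : ℂ))) := by
  apply Summable.of_norm_bounded hs
  intro n
  rw [norm_mul]
  have h1 : Complex.I * θ * ((n : ℂ) - (a:ℝ)) / ((v:ℝ):ℂ)
      = ((θ * (((n:ℝ) - a)/v) : ℝ) : ℂ) * Complex.I := by push_cast; ring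
  rw [h1, Complex.norm_exp_ofReal_mul_I]
  simp [_root_.abs_of_nonneg (hq n)]

theorem reChar (q : ℕ → ℝ) (hq : ∀ n, 0 ≤ q n) (hs : Summable q) (a v θ : ℝ) :
    (∑' n : ℕ, ((q n : ℝ) : ℂ) *
      Complex.exp (Complex.I * θ * ((n : ℂ) - (a : ℝ)) / ((v : ℝ) : ℂ))).re
    = ∑' n : ℕ, q n * Real.cos (θ * (((n:ℝ) - a)/v)) := by
  rw [← Complex.reCLM_apply, Complex.reCLM.map_tsum (summChar q hq hs a v θ)]
  apply tsum_congr
  intro n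
  have h1 : Complex.I * θ * ((n : ℂ) - (a:ℝ)) / ((v:ℝ):ℂ)
      = ((θ * (((n:ℝ) - a)/v) : ℝ) : ℂ) * Complex.I := by push_cast; ring
  rw [h1, Complex.reCLM_apply, Complex.re_ofReal_mul, Complex.exp_ofReal_mul_I_re]

section generic
variable {q : ℕ → ℝ} {x : ℕ → ℝ}
variable (hq : ∀ n, 0 ≤ q n) (hs : Summable q)

include hq hs in
theorem cos_summable' (y : ℕ → ℝ) : Summable (fun n => q n * Real.cos (y n)) := by
  apply Summable.of_norm_bounded hs
  intro n
  rw [Real.norm_eq_abs, abs_mul, _root_.abs_of_nonneg (hq n)]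
  calc q n * |Real.cos (y n)| ≤ q n * 1 :=
        mul_le_mul_of_nonneg_left (Real.abs_cos_le_one _) (hq n)
    _ = q n := mul_one _

include hq hs in
theorem g_eq' (htot : ∑' n, q n = 1) (y : ℕ → ℝ) :
    ∑' n, q n * (1 - Real.cos (y n)) = 1 - ∑' n, q n * Real.cos (y n) := by
  have h : ∀ n, q n * (1 - Real.cos (y n)) = q n - q n * Real.cos (y n) := fun n => by ring
  rw [tsum_congr h, Summable.tsum_sub hs (cos_summable' hq hs y), htot]

include hq hs in
theorem cos_tsum_bound' (y : ℕ → ℝ) :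
    |∑' n, q n * Real.cos (y n)| ≤ ∑' n, q n := by
  have hs1 : Summable (fun n => ‖q n * Real.cos (y n)‖) := by
    simpa only [Real.norm_eq_abs] using (cos_summable' hq hs y).abs
  calc |∑' n, q n * Real.cos (y n)|
      = ‖∑' n, q n * Real.cos (y n)‖ := (Real.norm_eq_abs _).symm
    _ ≤ ∑' n, ‖q n * Real.cos (y n)‖ := norm_tsum_le_tsum_norm hs1
    _ ≤ ∑' n, q n := by
        apply Summable.tsum_le_tsum _ hs1 hs
        intro n
        rw [Real.norm_eq_abs, abs_mul, _root_.abs_of_nonneg (hq n)]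
        calc q n * |Real.cos (y n)| ≤ q n * 1 :=
              mul_le_mul_of_nonneg_left (Real.abs_cos_le_one _) (hq n)
          _ = q n := mul_one _

include hq hs in
theorem g_cont' : Continuous (fun u : ℝ => ∑' n, q n * (1 - Real.cos (u * x n))) := by
  apply continuous_tsum (u := fun n => 2 * q n)
  · intro n; continuity
  · exact hs.mul_left 2
  · intro n u
    rw [Real.norm_eq_abs, abs_mul, _root_.abs_of_nonneg (hq n)]
    have h1 : |1 - Real.cos (u * x n)| ≤ 2 := by
      have := Real.neg_one_le_cos (u * x n)
      have := Real.cos_le_one (u * x n)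
      rw [abs_le]; constructor <;> linarith
    calc q n * |1 - Real.cos (u * x n)| ≤ q n * 2 := mul_le_mul_of_nonneg_left h1 (hq n)
      _ = 2 * q n := mul_comm _ _

end generic


theorem cosInt (x r : ℝ) (hx : x ≠ 0) : ∫ u in (0:ℝ)..r, Real.cos (u * x) = Real.sin (r * x) / x := by
  rw [intervalIntegral.integral_comp_mul_right Real.cos hx]
  simp [integral_cos, div_eq_inv_mul]

theorem oneSubCos_nonneg (c r : ℝ) (hr : 0 ≤ r) :
    0 ≤ ∫ u in (0:ℝ)..r, (1 - Real.cos (u * c)) := by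
  apply intervalIntegral.integral_nonneg hr
  intro u _
  have := Real.cos_le_one (u * c)
  linarith

theorem oneSubCos_intble (c r : ℝ) :
    IntervalIntegrable (fun u => 1 - Real.cos (u * c)) volume 0 r :=
  (continuous_const.sub (Real.continuous_cos.comp (continuous_id.mul continuous_const))).intervalIntegrable 0 r

theorem oneSubCos_le (c r : ℝ) (hr : 0 ≤ r) :
    ∫ u in (0:ℝ)..r, (1 - Real.cos (u * c)) ≤ 2 * r := by
  calc ∫ u in (0:ℝ)..r, (1 - Real.cos (u * c)) ≤ ∫ _u in (0:ℝ)..r, (2:ℝ) := by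
        apply intervalIntegral.integral_mono_on hr (oneSubCos_intble c r) intervalIntegrable_const
        intro u _
        have := Real.neg_one_le_cos (u * c)
        linarith
    _ = 2 * r := by simp [mul_comm]

theorem lowbd (x r : ℝ) (hr : 0 < r) (h : 2 ≤ r * |x|) :
    r / 2 ≤ ∫ u in (0:ℝ)..r, (1 - Real.cos (u * x)) := by
  have hx : x ≠ 0 := by rintro rfl; simp at h; linarith
  rw [intervalIntegral.integral_sub intervalIntegrable_const
    (by exact (Real.continuous_cos.comp (continuous_id.mul continuous_const)).intervalIntegrable 0 r)]
  rw [cosInt x r hx]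
  simp only [intervalIntegral.integral_const, smul_eq_mul, mul_one, sub_zero]
  have hxa : 0 < |x| := abs_pos.mpr hx
  have h1 : |Real.sin (r * x) / x| ≤ r / 2 := by
    rw [abs_div]
    rw [div_le_iff₀ hxa]
    calc |Real.sin (r*x)| ≤ 1 := Real.abs_sin_le_one _
      _ ≤ r / 2 * |x| := by rw [div_mul_eq_mul_div, le_div_iff₀ (by norm_num : (0:ℝ)<2)]; linarith
  have := abs_le.mp h1
  linarith [this.2]

theorem gaussInt (r : ℝ) (hr : 0 ≤ r) :
    ∫ u in (0:ℝ)..r, (1 - Real.exp (-u^2/2)) ≤ r^3/6 := by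
  have : ∫ u in (0:ℝ)..r, (u^2/2) = r^3/6 := by
    rw [intervalIntegral.integral_div, integral_pow]
    ring
  rw [← this]
  apply intervalIntegral.integral_mono_on hr
  · exact (continuous_const.sub (Real.continuous_exp.comp (by continuity))).intervalIntegrable 0 r
  · exact ((continuous_pow 2).div_const 2).intervalIntegrable 0 r
  · intro u hu
    have := Real.add_one_le_exp (-(u^2/2))
    have h2 : Real.exp (-u^2/2) = Real.exp (-(u^2/2)) := by ring_nf
    nlinarith [Real.exp_pos (-(u^2/2))]

section generic2
variable {q : ℕ → ℝ} {x : ℕ → ℝ}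

theorem swap' (hq : ∀ n, 0 ≤ q n) (hs : Summable q) (x : ℕ → ℝ) {r : ℝ} (hr : 0 < r) :
    ∫ u in (0:ℝ)..r, (∑' n, q n * (1 - Real.cos (u * x n)))
      = ∑' n, q n * ∫ u in (0:ℝ)..r, (1 - Real.cos (u * x n)) := by
  have meas : ∀ n : ℕ, AEStronglyMeasurable (fun u : ℝ => q n * (1 - Real.cos (u * x n)))
      (volume.restrict (Set.Ioc (0:ℝ) r)) := by
    intro n
    exact (continuous_const.mul (continuous_const.sub
      (Real.continuous_cos.comp (continuous_id.mul continuous_const)))).aestronglyMeasurable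
  have fin : ∑' n : ℕ, ∫⁻ u in Set.Ioc (0:ℝ) r, ‖q n * (1 - Real.cos (u * x n))‖₊ ≠ ⊤ := by
    have hbd : ∀ n : ℕ, ∫⁻ u in Set.Ioc (0:ℝ) r, ‖q n * (1 - Real.cos (u * x n))‖₊
        ≤ ENNReal.ofReal (2 * q n * r) := by
      intro n
      calc ∫⁻ u in Set.Ioc (0:ℝ) r, (‖q n * (1 - Real.cos (u * x n))‖₊ : ℝ≥0∞)
          ≤ ∫⁻ _u in Set.Ioc (0:ℝ) r, ENNReal.ofReal (2 * q n) := by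
            apply lintegral_mono
            intro u
            show (‖q n * (1 - Real.cos (u * x n))‖₊ : ℝ≥0∞) ≤ ENNReal.ofReal (2 * q n)
            rw [← enorm_eq_nnnorm, ← ofReal_norm_eq_enorm]
            apply ENNReal.ofReal_le_ofReal
            rw [Real.norm_eq_abs, abs_mul, _root_.abs_of_nonneg (hq n)]
            have h1 : |1 - Real.cos (u * x n)| ≤ 2 := by
              have := Real.neg_one_le_cos (u * x n)
              have := Real.cos_le_one (u * x n)
              rw [abs_le]; constructor <;> linarith
            calc q n * |1 - Real.cos (u * x n)| ≤ q n * 2 := mul_le_mul_of_nonneg_left h1 (hq n)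
              _ = 2 * q n := mul_comm _ _
        _ = ENNReal.ofReal (2 * q n) * volume (Set.Ioc (0:ℝ) r) := by
            rw [setLIntegral_const]
        _ = ENNReal.ofReal (2 * q n * r) := by
            rw [Real.volume_Ioc, sub_zero, ← ENNReal.ofReal_mul (by linarith [hq n] : (0:ℝ) ≤ 2 * q n)]
    apply ne_top_of_le_ne_top _ (ENNReal.tsum_le_tsum hbd)
    rw [← ENNReal.ofReal_tsum_of_nonneg (fun n => mul_nonneg (by linarith [hq n]) hr.le) (by
      have : Summable (fun n => 2 * q n * r) := (hs.mul_left 2).mul_right r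
      exact this)]
    exact ENNReal.ofReal_ne_top
  have key := integral_tsum meas fin
  rw [intervalIntegral.integral_of_le hr.le, key]
  apply tsum_congr
  intro n
  rw [intervalIntegral.integral_of_le hr.le, MeasureTheory.integral_const_mul]

theorem tail' (hq : ∀ n, 0 ≤ q n) (hs : Summable q) (x : ℕ → ℝ) {r : ℝ} (hr : 0 < r) :
    (r/2) * (∑' n, if 2/r ≤ |x n| then q n else 0)
      ≤ ∫ u in (0:ℝ)..r, (∑' n, q n * (1 - Real.cos (u * x n))) := by
  rw [swap' hq hs x hr, ← tsum_mul_left]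
  have hsl : Summable (fun n => if 2/r ≤ |x n| then q n else 0) := by
    apply Summable.of_nonneg_of_le _ _ hs
    · intro n; split <;> simp [hq n]
    · intro n; split <;> simp [hq n]
  have hsr : Summable (fun n => q n * ∫ u in (0:ℝ)..r, (1 - Real.cos (u * x n))) := by
    apply Summable.of_norm_bounded ((hs.mul_left 2).mul_right r)
    intro n
    rw [Real.norm_eq_abs, abs_mul, _root_.abs_of_nonneg (hq n),
      _root_.abs_of_nonneg (oneSubCos_nonneg (x n) r hr.le)]
    calc q n * ∫ u in (0:ℝ)..r, (1 - Real.cos (u * x n)) ≤ q n * (2*r) :=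
          mul_le_mul_of_nonneg_left (oneSubCos_le (x n) r hr.le) (hq n)
      _ = 2 * q n * r := by ring
  apply Summable.tsum_le_tsum _ (hsl.mul_left (r/2)) hsr
  intro n
  by_cases hc : 2/r ≤ |x n|
  · rw [if_pos hc]
    have h2 : 2 ≤ r * |x n| := by
      rw [div_le_iff₀ hr] at hc; linarith [hc]
    calc r/2 * q n ≤ (∫ u in (0:ℝ)..r, (1 - Real.cos (u * x n))) * q n :=
          mul_le_mul_of_nonneg_right (lowbd (x n) r hr h2) (hq n)
      _ = q n * ∫ u in (0:ℝ)..r, (1 - Real.cos (u * x n)) := mul_comm _ _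
  · rw [if_neg hc, mul_zero]
    exact mul_nonneg (hq n) (oneSubCos_nonneg (x n) r hr.le)

end generic2

-- Part D
noncomputable def qf (p : ℝ → ℕ → ℝ) (t : ℝ) (n : ℕ) : ℝ := p t n / ∑' j, p t j

noncomputable def xv (μ σ t : ℝ) (n : ℕ) : ℝ := ((n:ℝ) - μ * t) / (σ * Real.sqrt t)

section partD
variable {p : ℝ → ℕ → ℝ} {μ σ : ℝ}
variable (hpos : ∀ t > (0:ℝ), ∀ n, 0 ≤ p t n)
    (hsummable : ∀ t > (0:ℝ), Summable (p t))
    (hsum : ∀ t > (0:ℝ), 0 < ∑' n, p t n)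

include hpos hsum in
theorem qf_nonneg {t : ℝ} (ht : 0 < t) (n : ℕ) : 0 ≤ qf p t n :=
  div_nonneg (hpos t ht n) (hsum t ht).le

include hsummable in
theorem qf_summable {t : ℝ} (ht : 0 < t) : Summable (qf p t) :=
  (hsummable t ht).div_const _

omit hsummable in
include hsum in
theorem qf_tsum {t : ℝ} (ht : 0 < t) : ∑' n, qf p t n = 1 := by
  unfold qf
  rw [tsum_div_const, div_self (hsum t ht).ne']

include hpos hsummable hsum in
theorem ptlim
    (hclt : ∀ θ : ℝ,
      Tendsto (fun t : ℝ => ∑' n : ℕ,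
          ((p t n / ∑' j, p t j : ℝ) : ℂ) *
            Complex.exp (Complex.I * θ * ((n : ℂ) - (μ : ℝ) * t) / ((σ * Real.sqrt t : ℝ) : ℂ)))
        atTop (𝓝 (Complex.exp (-(θ : ℂ) ^ 2 / 2))))
    (u : ℝ) :
    Tendsto (fun t : ℝ => ∑' n, qf p t n * (1 - Real.cos (u * xv μ σ t n))) atTop
      (𝓝 (1 - Real.exp (-u^2/2))) := by
  have h0 : (Complex.exp (-(u:ℂ)^2/2)).re = Real.exp (-u^2/2) := by
    have h : (-(u:ℂ)^2/2) = ((-u^2/2 : ℝ) : ℂ) := by push_cast; ring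
    rw [h, Complex.exp_ofReal_re]
  have h1 : Tendsto (fun t : ℝ => 1 - (∑' n : ℕ,
      ((p t n / ∑' j, p t j : ℝ) : ℂ) *
        Complex.exp (Complex.I * u * ((n : ℂ) - (μ : ℝ) * t) / ((σ * Real.sqrt t : ℝ) : ℂ))).re)
      atTop (𝓝 (1 - Real.exp (-u^2/2))) := by
    rw [← h0]
    exact tendsto_const_nhds.sub ((Complex.continuous_re.tendsto _).comp (hclt u))
  apply Tendsto.congr' _ h1
  filter_upwards [eventually_gt_atTop 0] with t ht
  have e1 : (∑' n : ℕ, ((p t n / ∑' j, p t j : ℝ) : ℂ) *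
        Complex.exp (Complex.I * u * ((n : ℂ) - (μ : ℝ) * t) / ((σ * Real.sqrt t : ℝ) : ℂ)))
      = ∑' n : ℕ, ((qf p t n : ℝ) : ℂ) *
        Complex.exp (Complex.I * u * ((n : ℂ) - ((μ * t : ℝ) : ℂ)) / ((σ * Real.sqrt t : ℝ) : ℂ)) := by
    apply tsum_congr
    intro n
    simp only [qf]
    norm_cast
  rw [e1, reChar (qf p t) (qf_nonneg hpos hsum ht) (qf_summable hsummable ht) (μ * t)
    (σ * Real.sqrt t) u]
  rw [g_eq' (qf_nonneg hpos hsum ht) (qf_summable hsummable ht) (qf_tsum hsum ht)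
    (fun n => u * xv μ σ t n)]
  simp only [xv]

include hpos hsummable hsum in
theorem intlim
    (hclt : ∀ θ : ℝ,
      Tendsto (fun t : ℝ => ∑' n : ℕ,
          ((p t n / ∑' j, p t j : ℝ) : ℂ) *
            Complex.exp (Complex.I * θ * ((n : ℂ) - (μ : ℝ) * t) / ((σ * Real.sqrt t : ℝ) : ℂ)))
        atTop (𝓝 (Complex.exp (-(θ : ℂ) ^ 2 / 2))))
    {r : ℝ} (hr : 0 < r) :
    Tendsto (fun t : ℝ => ∫ u in (0:ℝ)..r, (∑' n, qf p t n * (1 - Real.cos (u * xv μ σ t n))))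
      atTop (𝓝 (∫ u in (0:ℝ)..r, (1 - Real.exp (-u^2/2)))) := by
  apply intervalIntegral.tendsto_integral_filter_of_dominated_convergence (fun _ => (2:ℝ))
  · filter_upwards [eventually_gt_atTop 0] with t ht
    exact (g_cont' (x := xv μ σ t) (qf_nonneg hpos hsum ht)
      (qf_summable hsummable ht)).aestronglyMeasurable
  · filter_upwards [eventually_gt_atTop 0] with t ht
    apply ae_of_all
    intro u _
    rw [Real.norm_eq_abs, g_eq' (qf_nonneg hpos hsum ht) (qf_summable hsummable ht)
      (qf_tsum hsum ht) (fun n => u * xv μ σ t n)]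
    have hb := cos_tsum_bound' (qf_nonneg hpos hsum ht) (qf_summable hsummable ht)
      (fun n => u * xv μ σ t n)
    rw [qf_tsum hsum ht] at hb
    have := abs_le.mp hb
    rw [abs_le]
    constructor <;> linarith [this.1, this.2]
  · exact intervalIntegrable_const
  · apply ae_of_all
    intro u _
    exact ptlim hpos hsummable hsum hclt u

end partD
section partE
variable {p : ℝ → ℕ → ℝ} {μ σ : ℝ}
variable (hpos : ∀ t > (0:ℝ), ∀ n, 0 ≤ p t n)
    (hsummable : ∀ t > (0:ℝ), Summable (p t))
    (hsum : ∀ t > (0:ℝ), 0 < ∑' n, p t n)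

include hpos hsummable hsum in
theorem conc (hμ : 0 < μ) (hσ : 0 < σ)
    (hclt : ∀ θ : ℝ,
      Tendsto (fun t : ℝ => ∑' n : ℕ,
          ((p t n / ∑' j, p t j : ℝ) : ℂ) *
            Complex.exp (Complex.I * θ * ((n : ℂ) - (μ : ℝ) * t) / ((σ * Real.sqrt t : ℝ) : ℂ)))
        atTop (𝓝 (Complex.exp (-(θ : ℂ) ^ 2 / 2)))) :
    Tendsto (fun t : ℝ => ∑' n : ℕ, if (μ/2) * t ≤ |(n:ℝ) - μ * t| then qf p t n else 0)
      atTop (𝓝 0) := by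
  rw [NormedAddCommGroup.tendsto_nhds_zero]
  intro ε hε
  set r := Real.sqrt ε / 2 with hrdef
  have hr : 0 < r := by positivity
  have hr2 : r^2 ≤ ε/4 := by
    rw [hrdef, div_pow, Real.sq_sqrt hε.le]; norm_num
  have hIlim : ∫ u in (0:ℝ)..r, (1 - Real.exp (-u^2/2)) ≤ r^3/6 := gaussInt r hr.le
  have hev1 : ∀ᶠ t in atTop,
      (∫ u in (0:ℝ)..r, (∑' n, qf p t n * (1 - Real.cos (u * xv μ σ t n)))) < r^3/6 + r*ε/4 := by
    apply (intlim hpos hsummable hsum hclt hr).eventually_lt_const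
    nlinarith
  set c := 4*σ/(μ*r) with hcdef
  have hc : 0 < c := by positivity
  filter_upwards [hev1, eventually_gt_atTop 0, eventually_ge_atTop (c^2)] with t hIt ht htc
  have hq := qf_nonneg hpos hsum ht
  have hs := qf_summable hsummable ht
  have tail := tail' hq hs (xv μ σ t) hr
  -- √t ≥ c
  have hw : c ≤ Real.sqrt t := by
    calc c = Real.sqrt (c^2) := (Real.sqrt_sq hc.le).symm
      _ ≤ Real.sqrt t := Real.sqrt_le_sqrt htc
  have hwpos : 0 < Real.sqrt t := Real.sqrt_pos.mpr ht
  have hwt : Real.sqrt t * Real.sqrt t = t := Real.mul_self_sqrt ht.le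
  -- termwise: bad condition implies tail condition
  have himp : ∀ n : ℕ, (μ/2) * t ≤ |(n:ℝ) - μ * t| → 2/r ≤ |xv μ σ t n| := by
    intro n hn
    have hd : 0 < σ * Real.sqrt t := mul_pos hσ hwpos
    have hxv : |xv μ σ t n| = |(n:ℝ) - μ * t| / (σ * Real.sqrt t) := by
      rw [show xv μ σ t n = ((n:ℝ) - μ * t)/(σ * Real.sqrt t) from rfl, abs_div,
        _root_.abs_of_pos hd]
    rw [hxv]
    have h1 : (μ/2) * t / (σ * Real.sqrt t) ≤ |(n:ℝ) - μ * t| / (σ * Real.sqrt t) :=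
      (div_le_div_iff_of_pos_right hd).mpr hn
    have h2 : (μ/2) * t / (σ * Real.sqrt t) = μ * Real.sqrt t / (2 * σ) := by
      field_simp
      linear_combination (-1)*hwt
    have h3 : 2/r ≤ μ * Real.sqrt t / (2 * σ) := by
      rw [div_le_div_iff₀ hr (by linarith : (0:ℝ) < 2*σ)]
      have : μ * c = 4 * σ / r := by rw [hcdef]; field_simp
      calc 2 * (2*σ) = (4 * σ / r) * r := by field_simp; ring
        _ = (μ * c) * r := by rw [this]
        _ ≤ (μ * Real.sqrt t) * r := by
            apply mul_le_mul_of_nonneg_right _ hr.le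
            exact mul_le_mul_of_nonneg_left hw hμ.le
        _ = μ * Real.sqrt t * r := rfl
    rw [h2] at h1
    linarith [h1, h3]
  -- compare badmass with tail mass
  have hsl : Summable (fun n => if 2/r ≤ |xv μ σ t n| then qf p t n else 0) := by
    apply Summable.of_nonneg_of_le _ _ hs
    · intro n; split <;> simp [hq n]
    · intro n; split <;> simp [hq n]
  have hsb : Summable (fun n : ℕ => if (μ/2) * t ≤ |(n:ℝ) - μ * t| then qf p t n else 0) := by
    apply Summable.of_nonneg_of_le _ _ hs
    · intro n; split <;> simp [hq n]
    · intro n; split <;> simp [hq n]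
  have hcomp : (∑' n : ℕ, if (μ/2) * t ≤ |(n:ℝ) - μ * t| then qf p t n else 0)
      ≤ ∑' n, if 2/r ≤ |xv μ σ t n| then qf p t n else 0 := by
    apply Summable.tsum_le_tsum _ hsb hsl
    intro n
    by_cases hn : (μ/2) * t ≤ |(n:ℝ) - μ * t|
    · rw [if_pos hn, if_pos (himp n hn)]
    · rw [if_neg hn]; split <;> simp [hq n]
  have hnn : 0 ≤ ∑' n : ℕ, if (μ/2) * t ≤ |(n:ℝ) - μ * t| then qf p t n else 0 :=
    tsum_nonneg (fun n => by split <;> simp [hq n])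
  rw [Real.norm_eq_abs, _root_.abs_of_nonneg hnn]
  -- tail mass bound
  have hT : (∑' n, if 2/r ≤ |xv μ σ t n| then qf p t n else 0) < r^2/3 + ε/2 := by
    have h5 : (r/2) * (∑' n, if 2/r ≤ |xv μ σ t n| then qf p t n else 0) < r^3/6 + r*ε/4 :=
      lt_of_le_of_lt tail hIt
    nlinarith [h5]
  calc (∑' n : ℕ, if (μ/2) * t ≤ |(n:ℝ) - μ * t| then qf p t n else 0)
      ≤ ∑' n, if 2/r ≤ |xv μ σ t n| then qf p t n else 0 := hcomp
    _ < r^2/3 + ε/2 := hT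
    _ ≤ ε/12 + ε/2 := by linarith
    _ < ε := by linarith

end partE
section helpers

theorem summ_if {f : ℕ → ℝ} (h0 : ∀ n, 0 ≤ f n) (hf : Summable f) (P : ℕ → Prop)
    [DecidablePred P] : Summable (fun n => if P n then f n else 0) := by
  apply Summable.of_nonneg_of_le _ _ hf <;> intro n <;> split <;> simp [h0 n]

theorem tsum_if_split {f : ℕ → ℝ} (h0 : ∀ n, 0 ≤ f n) (hf : Summable f) (P Q : ℕ → Prop)
    [DecidablePred P] [DecidablePred Q] :
    (∑' n, if P n then f n else 0)
      = (∑' n, if P n ∧ Q n then f n else 0) + (∑' n, if P n ∧ ¬ Q n then f n else 0) := by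
  rw [← Summable.tsum_add (summ_if h0 hf _) (summ_if h0 hf _)]
  apply tsum_congr; intro n
  by_cases hP : P n <;> by_cases hQ : Q n <;> simp [hP, hQ]

theorem tsum_if_mono {f : ℕ → ℝ} (h0 : ∀ n, 0 ≤ f n) (hf : Summable f) {P Q : ℕ → Prop}
    [DecidablePred P] [DecidablePred Q] (h : ∀ n, P n → Q n) :
    (∑' n, if P n then f n else 0) ≤ ∑' n, if Q n then f n else 0 := by
  apply Summable.tsum_le_tsum _ (summ_if h0 hf P) (summ_if h0 hf Q)
  intro n
  by_cases hP : P n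
  · rw [if_pos hP, if_pos (h n hP)]
  · rw [if_neg hP]; split <;> simp [h0 n]

theorem tsum_if_le_of_le {f g : ℕ → ℝ} (h0 : ∀ n, 0 ≤ f n) (hg0 : ∀ n, 0 ≤ g n)
    (hg : Summable g) (hle : ∀ n, f n ≤ g n) (P Q : ℕ → Prop)
    [DecidablePred P] [DecidablePred Q] (h : ∀ n, P n → Q n) :
    (∑' n, if P n then f n else 0) ≤ ∑' n, if Q n then g n else 0 := by
  have hf : Summable f := Summable.of_nonneg_of_le h0 hle hg
  apply Summable.tsum_le_tsum _ (summ_if h0 hf P) (summ_if hg0 hg Q)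
  intro n
  by_cases hP : P n
  · rw [if_pos hP, if_pos (h n hP)]; exact hle n
  · rw [if_neg hP]; split <;> simp [hg0 n]

end helpers

section partF
variable {p : ℝ → ℕ → ℝ} {μ σ : ℝ}
variable (hpos : ∀ t > (0:ℝ), ∀ n, 0 ≤ p t n)
    (hsummable : ∀ t > (0:ℝ), Summable (p t))
    (hsum : ∀ t > (0:ℝ), 0 < ∑' n, p t n)

include hpos hsummable hsum in
theorem den_eq {t : ℝ} (ht : 0 < t) :
    (∑' n : ℕ, if 0 < n then qf p t n else 0) = 1 - qf p t 0 := by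
  have hq : ∀ n, 0 ≤ qf p t n := fun n => qf_nonneg hpos hsum ht n
  have hs : Summable (qf p t) := qf_summable hsummable ht
  have key : ∀ n : ℕ, qf p t n = (if 0 < n then qf p t n else 0) + (if n = 0 then qf p t n else 0) := by
    intro n
    rcases Nat.eq_zero_or_pos n with h | h
    · simp [h]
    · rw [if_pos h, if_neg (Nat.pos_iff_ne_zero.mp h)]; ring
  have h1 : ∑' n, qf p t n
      = (∑' n : ℕ, if 0 < n then qf p t n else 0) + ∑' n : ℕ, if n = 0 then qf p t n else 0 := by
    rw [← Summable.tsum_add (summ_if hq hs _) (summ_if hq hs _)]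
    exact tsum_congr key
  have h2 : (∑' n : ℕ, if n = 0 then qf p t n else 0) = qf p t 0 := by
    rw [tsum_eq_single 0 (fun b hb => if_neg hb)]
    simp
  rw [qf_tsum hsum ht] at h1
  rw [h2] at h1
  linarith

include hpos hsummable hsum in
theorem ratio_eq {t : ℝ} (ht : 0 < t) (hq0 : qf p t 0 < 1/2) (F : ℕ → ℝ) :
    (∑' n : ℕ, if 0 < n then F n * p t n else 0) / (∑' n : ℕ, if 0 < n then p t n else 0)
      = (∑' n : ℕ, if 0 < n then F n * qf p t n else 0) / (1 - qf p t 0) := by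
  have hS : 0 < ∑' j, p t j := hsum t ht
  have e1 : (∑' n : ℕ, if 0 < n then F n * p t n else 0) / (∑' j, p t j)
      = ∑' n : ℕ, if 0 < n then F n * qf p t n else 0 := by
    rw [← tsum_div_const]
    apply tsum_congr; intro n
    by_cases h : 0 < n
    · simp only [if_pos h, qf, mul_div_assoc]
    · simp [h]
  have e2 : (∑' n : ℕ, if 0 < n then p t n else 0) / (∑' j, p t j)
      = 1 - qf p t 0 := by
    rw [← den_eq hpos hsummable hsum ht, ← tsum_div_const]
    apply tsum_congr; intro n
    by_cases h : 0 < n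
    · simp only [if_pos h, qf]
    · simp [h]
  have hDpos : (0:ℝ) < 1 - qf p t 0 := by linarith
  have hden : (∑' n : ℕ, if 0 < n then p t n else 0) = (1 - qf p t 0) * ∑' j, p t j := by
    rw [← e2]; field_simp
  rw [hden, ← e1, mul_comm, ← div_div]

end partF
section partG
variable {p : ℝ → ℕ → ℝ} {μ σ : ℝ}
variable (hpos : ∀ t > (0:ℝ), ∀ n, 0 ≤ p t n)
    (hsummable : ∀ t > (0:ℝ), Summable (p t))
    (hsum : ∀ t > (0:ℝ), 0 < ∑' n, p t n)

include hpos hsummable hsum in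
theorem lower_bound {t a : ℝ} (ht : 0 < t) (ha : 0 < a) (hμ : 0 < μ) :
    Real.exp (-a * (2*μ*t)) * ((1 - qf p t 0)
        - (∑' n : ℕ, if (μ/2) * t ≤ |(n:ℝ) - μ * t| then qf p t n else 0))
      ≤ ∑' n : ℕ, if 0 < n then Real.exp (-a * n) * qf p t n else 0 := by
  have hq : ∀ n, 0 ≤ qf p t n := fun n => qf_nonneg hpos hsum ht n
  have hs : Summable (qf p t) := qf_summable hsummable ht
  set E := Real.exp (-a * (2*μ*t)) with hEdef
  have hE : 0 ≤ E := Real.exp_nonneg _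
  have hsplit := tsum_if_split hq hs (fun n => 0 < n) (fun n => (n:ℝ) ≤ 2*μ*t)
  have hden := den_eq hpos hsummable hsum ht
  set A := ∑' n : ℕ, if 0 < n ∧ (n:ℝ) ≤ 2*μ*t then qf p t n else 0 with hAdef
  set B := ∑' n : ℕ, if 0 < n ∧ ¬((n:ℝ) ≤ 2*μ*t) then qf p t n else 0 with hBdef
  have hBbad : B ≤ ∑' n : ℕ, if (μ/2) * t ≤ |(n:ℝ) - μ * t| then qf p t n else 0 := by
    apply tsum_if_mono hq hs
    intro n hn
    have h1 : 2*μ*t < (n:ℝ) := by push_neg at hn; exact hn.2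
    have h2 : (μ/2) * t ≤ (n:ℝ) - μ*t := by nlinarith
    exact h2.trans (le_abs_self _)
  -- E * A ≤ NumS
  have hf' : ∀ n : ℕ, 0 ≤ Real.exp (-a * n) * qf p t n :=
    fun n => mul_nonneg (Real.exp_nonneg _) (hq n)
  have hf's : Summable (fun n : ℕ => Real.exp (-a * n) * qf p t n) := by
    apply Summable.of_nonneg_of_le hf' _ hs
    intro n
    apply mul_le_of_le_one_left (hq n)
    rw [Real.exp_le_one_iff]
    have : (0:ℝ) ≤ (n:ℝ) := Nat.cast_nonneg n
    nlinarith
  have hEA : E * A ≤ ∑' n : ℕ, if 0 < n then Real.exp (-a * n) * qf p t n else 0 := by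
    rw [hAdef, ← tsum_mul_left]
    apply Summable.tsum_le_tsum _ ((summ_if hq hs _).mul_left E) (summ_if hf' hf's _)
    intro n
    by_cases hc : 0 < n ∧ (n:ℝ) ≤ 2*μ*t
    · rw [if_pos hc, if_pos hc.1]
      apply mul_le_mul_of_nonneg_right _ (hq n)
      apply Real.exp_le_exp.mpr
      nlinarith [hc.2]
    · rw [if_neg hc, mul_zero]
      split
      · exact hf' n
      · exact le_refl 0
  set Bad := ∑' n : ℕ, if (μ/2) * t ≤ |(n:ℝ) - μ * t| then qf p t n else 0 with hBaddef
  calc E * ((1 - qf p t 0) - Bad) ≤ E * ((1 - qf p t 0) - B) := by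
        apply mul_le_mul_of_nonneg_left _ hE
        have := hBbad
        linarith
    _ = E * A := by
        rw [hden] at hsplit
        have : (1 - qf p t 0) - B = A := by linarith [hsplit]
        rw [this]
    _ ≤ _ := hEA

include hpos hsummable hsum in
theorem upper_bound {t a : ℝ} (ht : 0 < t) (ha : 0 < a) (hμ : 0 < μ) :
    (∑' n : ℕ, if 0 < n then Real.exp (-a * n) * qf p t n else 0)
      ≤ (∑' n : ℕ, if (μ/2) * t ≤ |(n:ℝ) - μ * t| then qf p t n else 0)
        + Real.exp (-a * ((μ/2)*t)) := by
  have hq : ∀ n, 0 ≤ qf p t n := fun n => qf_nonneg hpos hsum ht n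
  have hs : Summable (qf p t) := qf_summable hsummable ht
  set E := Real.exp (-a * ((μ/2)*t)) with hEdef
  have hf' : ∀ n : ℕ, 0 ≤ Real.exp (-a * n) * qf p t n :=
    fun n => mul_nonneg (Real.exp_nonneg _) (hq n)
  have hexple : ∀ n : ℕ, Real.exp (-a * n) * qf p t n ≤ qf p t n := by
    intro n
    apply mul_le_of_le_one_left (hq n)
    rw [Real.exp_le_one_iff]
    have : (0:ℝ) ≤ (n:ℝ) := Nat.cast_nonneg n
    nlinarith
  have hf's : Summable (fun n : ℕ => Real.exp (-a * n) * qf p t n) :=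
    Summable.of_nonneg_of_le hf' hexple hs
  rw [tsum_if_split hf' hf's (fun n => 0 < n) (fun n => (n:ℝ) ≤ (μ/2)*t)]
  have h1 : (∑' n : ℕ, if 0 < n ∧ (n:ℝ) ≤ (μ/2)*t then Real.exp (-a * n) * qf p t n else 0)
      ≤ ∑' n : ℕ, if (μ/2) * t ≤ |(n:ℝ) - μ * t| then qf p t n else 0 := by
    apply tsum_if_le_of_le hf' hq hs hexple
    intro n hn
    have h2 : (μ/2) * t ≤ μ*t - (n:ℝ) := by nlinarith [hn.2]
    calc (μ/2) * t ≤ μ*t - (n:ℝ) := h2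
      _ ≤ |μ*t - (n:ℝ)| := le_abs_self _
      _ = |(n:ℝ) - μ*t| := abs_sub_comm _ _
  have h2 : (∑' n : ℕ, if 0 < n ∧ ¬((n:ℝ) ≤ (μ/2)*t) then Real.exp (-a * n) * qf p t n else 0)
      ≤ E := by
    have step : (∑' n : ℕ, if 0 < n ∧ ¬((n:ℝ) ≤ (μ/2)*t) then Real.exp (-a * n) * qf p t n else 0)
        ≤ ∑' n : ℕ, E * (if 0 < n ∧ ¬((n:ℝ) ≤ (μ/2)*t) then qf p t n else 0) := by
      apply Summable.tsum_le_tsum _ (summ_if hf' hf's _) ((summ_if hq hs _).mul_left E)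
      intro n
      by_cases hc : 0 < n ∧ ¬((n:ℝ) ≤ (μ/2)*t)
      · rw [if_pos hc, if_pos hc]
        apply mul_le_mul_of_nonneg_right _ (hq n)
        apply Real.exp_le_exp.mpr
        have h3 : (μ/2)*t < (n:ℝ) := lt_of_not_ge hc.2
        nlinarith
      · rw [if_neg hc, if_neg hc, mul_zero]
    rw [tsum_mul_left] at step
    calc (∑' n : ℕ, if 0 < n ∧ ¬((n:ℝ) ≤ (μ/2)*t) then Real.exp (-a * n) * qf p t n else 0)
        ≤ E * ∑' n : ℕ, (if 0 < n ∧ ¬((n:ℝ) ≤ (μ/2)*t) then qf p t n else 0) := step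
      _ ≤ E * 1 := by
          apply mul_le_mul_of_nonneg_left _ (Real.exp_nonneg _)
          rw [← qf_tsum hsum ht]
          apply Summable.tsum_le_tsum _ (summ_if hq hs _) hs
          intro n; split <;> simp [hq n]
      _ = E := mul_one _
  linarith [h1, h2]

end partG
/-- Noise sensitivity corollary: if `(N_t − μt)/(σ√t) ⇒ N(0,1)` and `P(N_t = 0) → 0`,
then for perturbations `s(t) ≍ t^{-α}` the conditional Laplace functional
`E[e^{-s(t)N_t} | N_t > 0]` tends to `1` if `α > 1` and to `0` if `0 < α < 1`. -/
theorem stmt4 (p : ℝ → ℕ → ℝ)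
    (hpos : ∀ t > (0:ℝ), ∀ n, 0 ≤ p t n)
    (hsummable : ∀ t > (0:ℝ), Summable (p t))
    (hsum : ∀ t > (0:ℝ), 0 < ∑' n, p t n)
    (μ σ : ℝ) (hμ : 0 < μ) (hσ : 0 < σ)
    (hclt : ∀ θ : ℝ,
      Tendsto (fun t : ℝ => ∑' n : ℕ,
          ((p t n / ∑' j, p t j : ℝ) : ℂ) *
            Complex.exp (Complex.I * θ * ((n : ℂ) - (μ : ℝ) * t) / ((σ * Real.sqrt t : ℝ) : ℂ)))
        atTop (𝓝 (Complex.exp (-(θ : ℂ) ^ 2 / 2))))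
    (h0 : Tendsto (fun t : ℝ => p t 0 / ∑' j, p t j) atTop (𝓝 0))
    (α : ℝ) (s : ℝ → ℝ) (C : ℝ) (hC : 0 < C)
    (hs : ∀ᶠ t in atTop, C ≤ s t * t ^ α ∧ s t * t ^ α ≤ C⁻¹) :
    (1 < α →
      Tendsto (fun t : ℝ =>
          (∑' n : ℕ, if 0 < n then Real.exp (-(s t) * n) * p t n else 0)
            / (∑' n : ℕ, if 0 < n then p t n else 0)) atTop (𝓝 1)) ∧
    (0 < α → α < 1 →
      Tendsto (fun t : ℝ =>
          (∑' n : ℕ, if 0 < n then Real.exp (-(s t) * n) * p t n else 0)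
            / (∑' n : ℕ, if 0 < n then p t n else 0)) atTop (𝓝 0)) := by
  have hq0 : Tendsto (fun t : ℝ => qf p t 0) atTop (𝓝 0) := h0
  have hbad := conc hpos hsummable hsum hμ hσ hclt
  have hq0half : ∀ᶠ t in atTop, qf p t 0 < 1/2 := hq0.eventually_lt_const (by norm_num)
  have hden1 : Tendsto (fun t : ℝ => 1 - qf p t 0) atTop (𝓝 1) := by
    simpa using (tendsto_const_nhds (x := (1:ℝ)) (f := atTop)).sub hq0
  -- positivity of s t eventually, as a reusable fact
  have hspos : ∀ᶠ t in atTop, 0 < s t := by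
    filter_upwards [hs, eventually_gt_atTop 0] with t hst ht
    have htα := Real.rpow_pos_of_pos ht α
    rcases mul_pos_iff.mp (lt_of_lt_of_le hC hst.1) with ⟨h1, _⟩ | ⟨_, h2⟩
    · exact h1
    · exact absurd h2 (not_lt.mpr htα.le)
  constructor
  · -- α > 1
    intro hα
    have hexp0 : Tendsto (fun t : ℝ => t ^ (1-α)) atTop (𝓝 0) := by
      have h1 := tendsto_rpow_neg_atTop (show (0:ℝ) < α - 1 by linarith)
      apply h1.congr
      intro t
      rw [neg_sub]
    have hupper : Tendsto (fun t : ℝ => 2*μ*C⁻¹ * t^(1-α)) atTop (𝓝 0) := by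
      simpa using hexp0.const_mul (2*μ*C⁻¹)
    have harg : Tendsto (fun t : ℝ => s t * (2*μ*t)) atTop (𝓝 0) := by
      apply tendsto_of_tendsto_of_tendsto_of_le_of_le' tendsto_const_nhds hupper
      · filter_upwards [hspos, eventually_gt_atTop 0] with t hst ht
        exact le_of_lt (mul_pos hst (mul_pos (mul_pos (by norm_num : (0:ℝ)<2) hμ) ht))
      · filter_upwards [hs, eventually_gt_atTop 0] with t hst ht
        have ht1 : t ^ α * t ^ (1-α) = t := by
          rw [← Real.rpow_add ht]; norm_num
        have hst2 : s t * t ≤ C⁻¹ * t^(1-α) := by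
          calc s t * t = s t * t^α * t^(1-α) := by rw [mul_assoc, ht1]
            _ ≤ C⁻¹ * t^(1-α) := mul_le_mul_of_nonneg_right hst.2 (Real.rpow_nonneg ht.le _)
        nlinarith [mul_le_mul_of_nonneg_left hst2 (show (0:ℝ) ≤ 2*μ by linarith)]
    have hE : Tendsto (fun t : ℝ => Real.exp (-(s t) * (2*μ*t))) atTop (𝓝 1) := by
      have h2 : Tendsto (fun t : ℝ => -(s t) * (2*μ*t)) atTop (𝓝 0) := by
        have h4 := harg.neg
        rw [neg_zero] at h4
        apply h4.congr
        intro t; ring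
      have h3 := (Real.continuous_exp.tendsto 0).comp h2
      rw [Real.exp_zero] at h3
      exact h3
    have hL : Tendsto (fun t : ℝ => Real.exp (-(s t) * (2*μ*t)) *
        ((1 - qf p t 0 - (∑' n : ℕ, if (μ/2) * t ≤ |(n:ℝ) - μ * t| then qf p t n else 0))
          / (1 - qf p t 0))) atTop (𝓝 1) := by
      have hnum : Tendsto (fun t : ℝ => 1 - qf p t 0
          - (∑' n : ℕ, if (μ/2) * t ≤ |(n:ℝ) - μ * t| then qf p t n else 0)) atTop (𝓝 1) := by
        simpa using hden1.sub hbad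
      have hfrac := hnum.div hden1 one_ne_zero
      simpa using hE.mul hfrac
    apply tendsto_of_tendsto_of_tendsto_of_le_of_le' hL tendsto_const_nhds
    · filter_upwards [hs, hspos, eventually_gt_atTop 0, hq0half] with t hst hstpos ht hq0t
      rw [ratio_eq hpos hsummable hsum ht hq0t (fun n => Real.exp (-(s t) * (n:ℝ)))]
      have hDpos : (0:ℝ) < 1 - qf p t 0 := by linarith
      have hlb := lower_bound hpos hsummable hsum (a := s t) ht hstpos hμ
      rw [← mul_div_assoc]
      exact (div_le_div_iff_of_pos_right hDpos).mpr hlb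
    · filter_upwards [hs, hspos, eventually_gt_atTop 0, hq0half] with t hst hstpos ht hq0t
      rw [ratio_eq hpos hsummable hsum ht hq0t (fun n => Real.exp (-(s t) * (n:ℝ)))]
      have hDpos : (0:ℝ) < 1 - qf p t 0 := by linarith
      apply div_le_one_of_le₀ _ hDpos.le
      rw [← den_eq hpos hsummable hsum ht]
      have hq : ∀ n, 0 ≤ qf p t n := fun n => qf_nonneg hpos hsum ht n
      have hs' : Summable (qf p t) := qf_summable hsummable ht
      apply tsum_if_le_of_le (fun n => mul_nonneg (Real.exp_nonneg _) (hq n)) hq hs'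
        _ _ _ (fun n h => h)
      intro n
      apply mul_le_of_le_one_left (hq n)
      rw [Real.exp_le_one_iff]
      have : (0:ℝ) ≤ (n:ℝ) := Nat.cast_nonneg n
      nlinarith
  · -- 0 < α < 1
    intro hα0 hα1
    have hlow : Tendsto (fun t : ℝ => ((μ/2)*C) * t^(1-α)) atTop atTop :=
      (tendsto_rpow_atTop (by linarith : (0:ℝ) < 1-α)).const_mul_atTop
        (mul_pos (by linarith) hC)
    have hargbig : Tendsto (fun t : ℝ => s t * ((μ/2)*t)) atTop atTop := by
      apply tendsto_atTop_mono' atTop _ hlow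
      filter_upwards [hs, eventually_gt_atTop 0] with t hst ht
      have ht1 : t ^ α * t ^ (1-α) = t := by
        rw [← Real.rpow_add ht]; norm_num
      have hst2 : C * t^(1-α) ≤ s t * t := by
        calc C * t^(1-α) ≤ s t * t^α * t^(1-α) :=
              mul_le_mul_of_nonneg_right hst.1 (Real.rpow_nonneg ht.le _)
          _ = s t * t := by rw [mul_assoc, ht1]
      nlinarith [mul_le_mul_of_nonneg_left hst2 (show (0:ℝ) ≤ μ/2 by linarith)]
    have hE' : Tendsto (fun t : ℝ => Real.exp (-(s t) * ((μ/2)*t))) atTop (𝓝 0) := by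
      have h2 : Tendsto (fun t : ℝ => -(s t) * ((μ/2)*t)) atTop atBot := by
        have h4 := tendsto_neg_atTop_atBot.comp hargbig
        apply h4.congr
        intro t
        simp only [Function.comp_apply]
        ring
      have h3 := Real.tendsto_exp_atBot.comp h2
      exact h3
    have hU : Tendsto (fun t : ℝ =>
        ((∑' n : ℕ, if (μ/2) * t ≤ |(n:ℝ) - μ * t| then qf p t n else 0)
          + Real.exp (-(s t) * ((μ/2)*t))) / (1 - qf p t 0)) atTop (𝓝 0) := by
      have hnum := hbad.add hE'
      rw [add_zero] at hnum
      have h5 := hnum.div hden1 one_ne_zero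
      rw [zero_div] at h5
      exact h5
    apply tendsto_of_tendsto_of_tendsto_of_le_of_le' tendsto_const_nhds hU
    · filter_upwards [eventually_gt_atTop 0] with t ht
      apply div_nonneg <;> apply tsum_nonneg <;> intro n <;> split
      · exact mul_nonneg (Real.exp_nonneg _) (hpos t ht n)
      · exact le_refl 0
      · exact hpos t ht n
      · exact le_refl 0
    · filter_upwards [hs, hspos, eventually_gt_atTop 0, hq0half] with t hst hstpos ht hq0t
      rw [ratio_eq hpos hsummable hsum ht hq0t (fun n => Real.exp (-(s t) * (n:ℝ)))]
      have hDpos : (0:ℝ) < 1 - qf p t 0 := by linarith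
      have hub := upper_bound hpos hsummable hsum (a := s t) ht hstpos hμ
      exact (div_le_div_iff_of_pos_right hDpos).mpr hub
end

section
/- Let f(β,t) = 2 e^{β⁴t/4} Φ(β²√(t/2)) where Φ is the standard normal CDF. Define for s ≥ 0 the quantity L_t(s) = f(βe^{-s/2}, t)/f(β, t). Then L_t(s) = exp{(β⁴t/4)(e^{-2s} − 1)} · Φ(β² e^{-s}√(t/2))/Φ(β²√(t/2)), and for each fixed t > 0 and β > 0, s ↦ L_t(s) is the Laplace transform of a probability distribution on ℤ_{≥0} (i.e., L_t is completely monotone with L_t(0) = 1). -/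
open MeasureTheory Filter Topology

/-- Standard normal CDF. -/
noncomputable def normalCDF (x : ℝ) : ℝ :=
  ∫ y in Set.Iio x, (Real.sqrt (2 * Real.pi))⁻¹ * Real.exp (-y ^ 2 / 2)

open scoped Nat

lemma gauss_integrable : MeasureTheory.Integrable (fun z : ℝ => Real.exp (-z ^ 2 / 2)) := by
  have h := integrable_exp_neg_mul_sq (show (0:ℝ) < 1/2 by norm_num)
  exact h.congr (Filter.Eventually.of_forall fun x => by ring_nf)

lemma normalCDF_pos (x : ℝ) : 0 < normalCDF x := by
  rw [normalCDF]
  rw [setIntegral_pos_iff_support_of_nonneg_ae]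
  · have : Function.support (fun y : ℝ => (Real.sqrt (2 * Real.pi))⁻¹ * Real.exp (-y ^ 2 / 2))
        = Set.univ := by
      ext y
      simp only [Function.mem_support, Set.mem_univ, iff_true]
      have h2 : (0:ℝ) < Real.sqrt (2 * Real.pi) := Real.sqrt_pos.mpr (by positivity)
      positivity
    rw [this, Set.univ_inter, Real.volume_Iio]
    simp
  · filter_upwards with y
    have h2 : (0:ℝ) < Real.sqrt (2 * Real.pi) := Real.sqrt_pos.mpr (by positivity)
    positivity
  · exact (gauss_integrable.const_mul _).integrableOn

noncomputable def gmoment (n : ℕ) : ℝ := ∫ z in Set.Ioi (0:ℝ), z ^ n * Real.exp (-z ^ 2 / 2)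

lemma gmoment_nonneg (n : ℕ) : 0 ≤ gmoment n := by
  apply setIntegral_nonneg measurableSet_Ioi
  intro z hz
  have : (0:ℝ) < z := hz
  positivity

lemma gmoment_integrableOn (n : ℕ) :
    MeasureTheory.IntegrableOn (fun z : ℝ => z ^ n * Real.exp (-z ^ 2 / 2)) (Set.Ioi 0) := by
  have h := integrableOn_rpow_mul_exp_neg_mul_sq (show (0:ℝ) < 1/2 by norm_num)
    (show (-1:ℝ) < (n:ℝ) by exact lt_of_lt_of_le (by norm_num) (Nat.cast_nonneg n))
  apply h.congr_fun ?_ measurableSet_Ioi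
  intro z hz
  simp only [Real.rpow_natCast]
  ring_nf

lemma exp_moment (n : ℕ) {c : ℝ} (hc : 0 < c) :
    ∫ z in Set.Ioi (0:ℝ), z ^ n * Real.exp (-(c * z)) = (n ! : ℝ) / c ^ (n + 1) := by
  have h := Real.integral_rpow_mul_exp_neg_mul_Ioi (show (0:ℝ) < (n:ℝ) + 1 by positivity) hc
  have h2 : ∫ t in Set.Ioi (0:ℝ), t ^ n * Real.exp (-(c * t)) =
      ∫ t in Set.Ioi (0:ℝ), t ^ (((n:ℝ) + 1) - 1) * Real.exp (-(c * t)) := by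
    apply setIntegral_congr_fun measurableSet_Ioi
    intro t ht
    show t ^ n * Real.exp (-(c * t)) = t ^ (((n:ℝ) + 1) - 1) * Real.exp (-(c * t))
    rw [show ((n:ℝ) + 1) - 1 = (n:ℝ) by ring, Real.rpow_natCast]
  rw [h2, h, show ((n:ℝ) + 1) = ((n + 1 : ℕ) : ℝ) by push_cast; ring, Real.rpow_natCast,
    Nat.cast_add, Nat.cast_one, Real.Gamma_nat_eq_factorial, one_div, inv_pow]
  ring

lemma expmul_integrableOn (n : ℕ) {c : ℝ} (hc : 0 < c) :
    MeasureTheory.IntegrableOn (fun z : ℝ => z ^ n * Real.exp (-(c * z))) (Set.Ioi 0) := by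
  have h := integrableOn_rpow_mul_exp_neg_mul_rpow
    (show (-1:ℝ) < (n:ℝ) by exact lt_of_lt_of_le (by norm_num) (Nat.cast_nonneg n))
    (show (0:ℝ) < 1 by norm_num) hc
  apply h.congr_fun ?_ measurableSet_Ioi
  intro z hz
  simp only [Real.rpow_natCast, Real.rpow_one, neg_mul]

lemma gmoment_le (n : ℕ) {c : ℝ} (hc : 0 < c) :
    gmoment n ≤ Real.exp (c ^ 2 / 2) * ((n ! : ℝ) / c ^ (n + 1)) := by
  rw [gmoment, ← exp_moment n hc, ← integral_const_mul]
  apply setIntegral_mono_on (gmoment_integrableOn n)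
    ((expmul_integrableOn n hc).const_mul _) measurableSet_Ioi
  intro z hz
  have hz' : (0:ℝ) < z := hz
  rw [mul_comm (Real.exp (c ^ 2 / 2)), mul_assoc]
  apply mul_le_mul_of_nonneg_left ?_ (by positivity)
  rw [← Real.exp_add]
  apply Real.exp_le_exp.mpr
  nlinarith [sq_nonneg (z - c)]

lemma summable_g {y : ℝ} (hy : 0 ≤ y) :
    Summable (fun n : ℕ => gmoment n * y ^ n / (n ! : ℝ)) := by
  set c : ℝ := y + 1 with hc
  have hc0 : 0 < c := by positivity
  apply Summable.of_nonneg_of_le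
    (fun n => by have := gmoment_nonneg n; positivity)
    (fun n => ?_) ((summable_geometric_of_lt_one (by positivity)
      (show y / c < 1 by rw [div_lt_one hc0]; simp [hc])).mul_left (Real.exp (c ^ 2 / 2) / c))
  have h1 : gmoment n * y ^ n / (n ! : ℝ)
      ≤ (Real.exp (c ^ 2 / 2) * ((n ! : ℝ) / c ^ (n + 1))) * y ^ n / (n ! : ℝ) := by
    apply div_le_div_of_nonneg_right ?_ ?_ |>.trans_eq rfl
    · exact mul_le_mul_of_nonneg_right (gmoment_le n hc0) (by positivity)
    · positivity
  refine h1.trans (le_of_eq ?_)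
  have hfac : ((n ! : ℝ)) ≠ 0 := by exact_mod_cast (Nat.factorial_pos n).ne'
  field_simp
  rw [div_pow, pow_succ, mul_comm (c ^ n) c, mul_assoc, mul_div_cancel₀ _ (pow_ne_zero n hc0.ne')]

lemma exp_tsum (x : ℝ) : Real.exp x = ∑' n : ℕ, x ^ n / (n ! : ℝ) := by
  rw [Real.exp_eq_exp_ℝ, NormedSpace.exp_eq_tsum_div]

lemma key {y : ℝ} (hy : 0 ≤ y) :
    ∑' n : ℕ, gmoment n * y ^ n / (n ! : ℝ)
      = Real.sqrt (2 * Real.pi) * Real.exp (y ^ 2 / 2) * normalCDF y := by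
  set F : ℕ → ℝ → ℝ := fun n z => z ^ n * Real.exp (-z ^ 2 / 2) * y ^ n / (n ! : ℝ) with hF
  have hFint : ∀ n, MeasureTheory.IntegrableOn (F n) (Set.Ioi 0) :=
    fun n => ((gmoment_integrableOn n).mul_const _).div_const _
  have hterm : ∀ n, ∫ z in Set.Ioi (0:ℝ), F n z = gmoment n * y ^ n / (n ! : ℝ) := by
    intro n
    rw [hF, gmoment]
    simp only []
    rw [integral_div, integral_mul_const]
  have hFnn : ∀ n, 0 ≤ᵐ[volume.restrict (Set.Ioi 0)] F n := by
    intro n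
    filter_upwards [ae_restrict_mem measurableSet_Ioi] with z hz
    have hz' : (0:ℝ) < z := hz
    have hfac : (0:ℝ) < (n ! : ℝ) := by positivity
    rw [hF]
    positivity
  -- swap sum and integral
  have hswap : ∫ z in Set.Ioi (0:ℝ), ∑' n : ℕ, F n z
      = ∑' n : ℕ, ∫ z in Set.Ioi (0:ℝ), F n z := by
    apply MeasureTheory.integral_tsum
    · intro n
      apply Continuous.aestronglyMeasurable
      fun_prop
    · have : ∀ n : ℕ, ∫⁻ z, ‖F n z‖ₑ ∂(volume.restrict (Set.Ioi 0))
          = ENNReal.ofReal (gmoment n * y ^ n / (n ! : ℝ)) := by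
        intro n
        rw [← hterm n, MeasureTheory.ofReal_integral_eq_lintegral_ofReal (hFint n) (hFnn n)]
        apply lintegral_congr_ae
        filter_upwards [hFnn n] with z hz
        rw [Real.enorm_eq_ofReal hz]
      simp_rw [this]
      rw [← ENNReal.ofReal_tsum_of_nonneg
        (fun n => by have := gmoment_nonneg n; positivity) (summable_g hy)]
      exact ENNReal.ofReal_ne_top
  rw [← tsum_congr hterm, ← hswap]
  -- pointwise sum
  have hpt : ∀ z : ℝ, ∑' n : ℕ, F n z = Real.exp (y * z) * Real.exp (-z ^ 2 / 2) := by
    intro z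
    rw [exp_tsum (y * z), ← tsum_mul_right]
    apply tsum_congr
    intro n
    rw [hF]
    simp only [mul_pow]
    ring
  rw [setIntegral_congr_fun measurableSet_Ioi (fun z _ => hpt z)]
  -- complete the square
  have hsq : ∀ z : ℝ, Real.exp (y * z) * Real.exp (-z ^ 2 / 2)
      = Real.exp (y ^ 2 / 2) * Real.exp (-(z - y) ^ 2 / 2) := by
    intro z
    rw [← Real.exp_add, ← Real.exp_add]
    congr 1
    ring
  rw [setIntegral_congr_fun measurableSet_Ioi (fun z _ => hsq z), integral_const_mul]
  -- translate
  have emb : MeasurableEmbedding (fun x : ℝ => x + y) :=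
    (Homeomorph.addRight y).isClosedEmbedding.measurableEmbedding
  have htrans : ∫ z in Set.Ioi (0:ℝ), Real.exp (-(z - y) ^ 2 / 2)
      = ∫ x in Set.Ioi (-y), Real.exp (-x ^ 2 / 2) := by
    have h1 : ∫ z in Set.Ioi (0:ℝ), Real.exp (-(z - y) ^ 2 / 2)
        = ∫ z in Set.Ioi (0:ℝ), Real.exp (-(z - y) ^ 2 / 2)
            ∂(Measure.map (fun x : ℝ => x + y) volume) := by
      rw [map_add_right_eq_self]
    rw [h1, emb.setIntegral_map]
    rw [Set.preimage_add_const_Ioi, zero_sub]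
    apply setIntegral_congr_fun measurableSet_Ioi
    intro x _
    simp [add_sub_cancel_right]
  rw [htrans]
  -- reflect
  have hrefl : ∫ x in Set.Ioi (-y), Real.exp (-x ^ 2 / 2)
      = ∫ x in Set.Iio y, Real.exp (-x ^ 2 / 2) := by
    have h := integral_comp_neg_Ioi (-y) (fun x => Real.exp (-x ^ 2 / 2))
    simp only [neg_sq, neg_neg] at h
    rw [h, integral_Iic_eq_integral_Iio]
  rw [hrefl]
  -- identify with normalCDF
  rw [normalCDF, integral_const_mul]
  have h2 : (0:ℝ) < Real.sqrt (2 * Real.pi) := Real.sqrt_pos.mpr (by positivity)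
  field_simp

/-- With `f(β,t) = 2e^{β⁴t/4}Φ(β²√(t/2)) = E[Z_β(t,0)²]`, the ratio
`L_t(s) = f(βe^{-s/2},t)/f(β,t)` equals
`exp{(β⁴t/4)(e^{-2s}−1)} Φ(β²e^{-s}√(t/2))/Φ(β²√(t/2))` and is the Laplace
transform of a probability distribution on `ℤ_{≥0}`. -/
theorem stmt7 (β t : ℝ) (hβ : 0 < β) (ht : 0 < t)
    (f : ℝ → ℝ → ℝ)
    (hf : ∀ b u, f b u = 2 * Real.exp (b ^ 4 * u / 4) * normalCDF (b ^ 2 * Real.sqrt (u / 2)))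
    (L : ℝ → ℝ) (hL : ∀ s, L s = f (β * Real.exp (-s / 2)) t / f β t) :
    (∀ s : ℝ, L s = Real.exp (β ^ 4 * t / 4 * (Real.exp (-2 * s) - 1)) *
        normalCDF (β ^ 2 * Real.exp (-s) * Real.sqrt (t / 2)) / normalCDF (β ^ 2 * Real.sqrt (t / 2))) ∧
    L 0 = 1 ∧
    ∃ p : ℕ → ℝ, (∀ n, 0 ≤ p n) ∧ (∑' n, p n) = 1 ∧
      ∀ s : ℝ, 0 ≤ s → L s = ∑' n : ℕ, p n * Real.exp (-s * n) := by
  have hsqrt : 0 < Real.sqrt (t / 2) := Real.sqrt_pos.mpr (by positivity)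
  have hsq1 : Real.sqrt (t / 2) ^ 2 = t / 2 := Real.sq_sqrt (by positivity)
  set a : ℝ := β ^ 2 * Real.sqrt (t / 2) with ha
  have ha0 : 0 < a := by positivity
  have hfpos : ∀ b : ℝ, 0 < f b t := fun b => by
    rw [hf]; exact mul_pos (by positivity) (normalCDF_pos _)
  have part1 : ∀ s : ℝ, L s = Real.exp (β ^ 4 * t / 4 * (Real.exp (-2 * s) - 1)) *
      normalCDF (β ^ 2 * Real.exp (-s) * Real.sqrt (t / 2)) / normalCDF (β ^ 2 * Real.sqrt (t / 2)) := by
    intro s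
    have c4 : ((4:ℕ):ℝ) * (-s / 2) = -2 * s := by push_cast; ring
    have c2 : ((2:ℕ):ℝ) * (-s / 2) = -s := by push_cast; ring
    have e4 : (β * Real.exp (-s / 2)) ^ 4 = β ^ 4 * Real.exp (-2 * s) := by
      rw [mul_pow, ← Real.exp_nat_mul, c4]
    have e2 : (β * Real.exp (-s / 2)) ^ 2 = β ^ 2 * Real.exp (-s) := by
      rw [mul_pow, ← Real.exp_nat_mul, c2]
    rw [hL, hf, hf, e4, e2]
    have hΦ := normalCDF_pos (β ^ 2 * Real.sqrt (t / 2))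
    rw [show β ^ 4 * t / 4 * (Real.exp (-2 * s) - 1)
        = β ^ 4 * Real.exp (-2 * s) * t / 4 - β ^ 4 * t / 4 by ring, Real.exp_sub]
    have he1 := Real.exp_ne_zero (β ^ 4 * Real.exp (-2 * s) * t / 4)
    have he2 := Real.exp_ne_zero (β ^ 4 * t / 4)
    field_simp
  have part2 : L 0 = 1 := by
    rw [hL]
    norm_num
    exact (hfpos β).ne'
  refine ⟨part1, part2, ?_⟩
  set M : ℝ := ∑' n : ℕ, gmoment n * a ^ n / (n ! : ℝ) with hM
  have hMeq : M = Real.sqrt (2 * Real.pi) * Real.exp (a ^ 2 / 2) * normalCDF a := key ha0.le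
  have hrtpos : (0:ℝ) < Real.sqrt (2 * Real.pi) := Real.sqrt_pos.mpr (by positivity)
  have hMpos : 0 < M := by
    rw [hMeq]
    exact mul_pos (mul_pos hrtpos (Real.exp_pos _)) (normalCDF_pos a)
  refine ⟨fun n => gmoment n * a ^ n / (n ! : ℝ) / M, ?_, ?_, ?_⟩
  · intro n
    have h1 := gmoment_nonneg n
    have h2 : (0:ℝ) < (n ! : ℝ) := by positivity
    positivity
  · rw [tsum_div_const, ← hM, div_self hMpos.ne']
  · intro s hs
    set y : ℝ := β ^ 2 * Real.exp (-s) * Real.sqrt (t / 2) with hy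
    have hy0 : (0:ℝ) ≤ y := by positivity
    have hya : y = a * Real.exp (-s) := by rw [hy, ha]; ring
    have hexp2 : Real.exp (-s) ^ 2 = Real.exp (-2 * s) := by
      rw [← Real.exp_nat_mul]
      congr 1
      push_cast; ring
    have hLs : L s = (∑' n : ℕ, gmoment n * y ^ n / (n ! : ℝ)) / M := by
      rw [part1 s, key hy0, hMeq]
      have hexp : Real.exp (β ^ 4 * t / 4 * (Real.exp (-2 * s) - 1))
          = Real.exp (y ^ 2 / 2) / Real.exp (a ^ 2 / 2) := by
        rw [← Real.exp_sub]
        congr 1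
        have expand1 : y ^ 2 = β ^ 4 * Real.exp (-2 * s) * (t / 2) := by
          rw [hy, mul_pow, mul_pow, hexp2, hsq1]; ring
        have expand2 : a ^ 2 = β ^ 4 * (t / 2) := by
          rw [ha, mul_pow, hsq1]; ring
        rw [expand1, expand2]; ring
      rw [hexp, div_mul_eq_mul_div, div_div, mul_assoc (Real.sqrt (2 * Real.pi)),
        mul_assoc (Real.sqrt (2 * Real.pi)), mul_div_mul_left _ _ hrtpos.ne']
    rw [hLs, ← tsum_div_const]
    apply tsum_congr
    intro n
    have hxn : y ^ n = a ^ n * Real.exp (-s * n) := by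
      rw [hya, mul_pow, ← Real.exp_nat_mul]
      congr 2
      ring
    rw [hxn]
    ring
end
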